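/- For integers n > 2k - t with t + 1 < k < 2t + 1 and q ≥ 3: [n-t-2 choose k-t-2]_q · (1 + θ_{t+1}·q^{k-t-1}·(q^{n-k}-1)/(q^{k-t-1}-1)) > θ_k + Σ_{j=0}^{k-t-2} [k-t+1 choose j+1]_q · q^{(k-t-j)(k-t-j-1)} · [n-k-1 choose k-t-j-1]_q. -/
import Mathlib

/-- Gaussian binomial coefficient `[n choose k]_q` as a real number,
with the convention that it is `0` for `k < 0` (and for `k > n`). -/
noncomputable def gbin (q n : ℕ) (k : ℤ) : ℝ :=
  if 0 ≤ k then ∏ i ∈ Finset.range k.toNat, ((q:ℝ)^(n-i) - 1)/((q:ℝ)^(i+1) - 1) else 0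

/-- `θ_m = (q^{m+1}-1)/(q-1)`, the number of points of `PG(m,q)`. -/
noncomputable def theta (q m : ℕ) : ℝ := ((q:ℝ)^(m+1) - 1)/((q:ℝ) - 1)

open Finset

lemma ratio_ge (Q : ℝ) (hQ : 1 < Q) (a b : ℕ) (hb : 1 ≤ b) (hba : b ≤ a) :
    Q^(a-b) ≤ (Q^a - 1)/(Q^b - 1) := by
  have hQb : (1:ℝ) < Q^b := one_lt_pow₀ hQ (by omega)
  rw [le_div_iff₀ (by linarith)]
  have h1 : Q^(a-b) * Q^b = Q^a := by rw [← pow_add]; congr 1; omega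
  have h2 : (1:ℝ) ≤ Q^(a-b) := one_le_pow₀ hQ.le
  nlinarith

lemma weier (f : ℕ → ℝ) (h0 : ∀ i, 0 ≤ f i) (h1 : ∀ i, f i ≤ 1) (K : ℕ) :
    1 - ∑ i ∈ Finset.range K, f i ≤ ∏ i ∈ Finset.range K, (1 - f i) := by
  induction K with
  | zero => simp
  | succ K ih =>
    rw [Finset.sum_range_succ, Finset.prod_range_succ]
    have hp : 0 ≤ ∏ i ∈ range K, (1 - f i) :=
      Finset.prod_nonneg fun i _ => by linarith [h1 i]
    have hs : 0 ≤ ∑ i ∈ range K, f i := Finset.sum_nonneg fun i _ => h0 i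
    nlinarith [h0 K, h1 K]

lemma geo (Q : ℝ) (hQ : 3 ≤ Q) (K : ℕ) :
    ∑ i ∈ Finset.range K, (1/Q)^(i+1) ≤ 1/(Q-1) := by
  have h0 : (0:ℝ) < Q := by linarith
  have hr : (1/Q) < 1 := by rw [div_lt_one h0]; linarith
  have hr0 : (0:ℝ) ≤ 1/Q := by positivity
  have h1 : ∑ i ∈ Finset.range K, (1/Q)^(i+1) = (1/Q) * ∑ i ∈ Finset.range K, (1/Q)^i := by
    rw [Finset.mul_sum]
    exact Finset.sum_congr rfl fun i _ => by ring
  rw [h1]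
  have h2 : ∑ i ∈ Finset.range K, (1/Q)^i ≤ 1/(1-(1/Q)) := by
    rw [geom_sum_eq (by intro h; rw [h] at hr; linarith : (1/Q) ≠ 1)]
    have e : ((1/Q)^K - 1)/((1/Q) - 1) = (1 - (1/Q)^K)/(1-(1/Q)) := by
      rw [div_eq_div_iff (by linarith) (by linarith)]; ring
    rw [e, div_le_div_iff₀ (by linarith) (by linarith)]
    nlinarith [pow_nonneg hr0 K]
  have h3 : (1/Q) * (1/(1-(1/Q))) = 1/(Q-1) := by
    rw [one_sub_div (by linarith)]
    field_simp
  calc (1/Q) * ∑ i ∈ Finset.range K, (1/Q)^i ≤ (1/Q) * (1/(1-(1/Q))) := by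
        apply mul_le_mul_of_nonneg_left h2 hr0
    _ = 1/(Q-1) := h3

lemma sum_aux (N K : ℕ) (h : 2*K ≤ N+1) :
    ∑ i ∈ Finset.range K, (N - 2*i - 1) = K*(N-K) := by
  induction K with
  | zero => simp
  | succ K ih =>
    rw [Finset.sum_range_succ, ih (by omega)]
    have h1 : K ≤ N := by omega
    have h2 : K + 1 ≤ N := by omega
    have h3 : 2*K + 1 ≤ N := by omega
    have h4 : 2*K ≤ N := by omega
    have h5 : 1 ≤ N - 2*K := by omega
    zify [h1, h2, h3, h4, h5]
    ring

lemma sum_aux2 (N K : ℕ) (h : K ≤ N) :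
    ∑ i ∈ Finset.range K, (N-i) = K*(N-K) + ∑ i ∈ Finset.range K, (i+1) := by
  induction K with
  | zero => simp
  | succ K ih =>
    rw [Finset.sum_range_succ, Finset.sum_range_succ, ih (by omega)]
    have h1 : K ≤ N := by omega
    have h2 : K + 1 ≤ N := by omega
    zify [h1, h2]
    ring

lemma gbin_natCast (q N : ℕ) (K : ℕ) :
    gbin q N (K:ℤ) = ∏ i ∈ Finset.range K, ((q:ℝ)^(N-i) - 1)/((q:ℝ)^(i+1)-1) := by
  unfold gbin
  rw [if_pos (Int.natCast_nonneg K), Int.toNat_natCast]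

lemma gbin_one (q N : ℕ) : gbin q N ((1:ℕ):ℤ) = ((q:ℝ)^N - 1)/((q:ℝ)-1) := by
  rw [gbin_natCast]
  simp

lemma gbin_lower (q N K : ℕ) (hq : 3 ≤ q) (h : 2*K ≤ N+1) :
    (q:ℝ)^(K*(N-K)) ≤ gbin q N (K:ℤ) := by
  have hQ : (3:ℝ) ≤ (q:ℝ) := by exact_mod_cast hq
  rw [gbin_natCast, ← sum_aux N K h, ← Finset.prod_pow_eq_pow_sum]
  apply Finset.prod_le_prod (fun i _ => by positivity)
  intro i hi
  rw [Finset.mem_range] at hi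
  have e : N - 2*i - 1 = (N-i) - (i+1) := by omega
  rw [e]
  exact ratio_ge _ (by linarith) _ _ (by omega) (by omega)

lemma gbin_upper (q N K : ℕ) (hq : 3 ≤ q) (h : K ≤ N) :
    gbin q N (K:ℤ) ≤ (q:ℝ)^(K*(N-K)) * (((q:ℝ)-1)/((q:ℝ)-2)) := by
  have hQ : (3:ℝ) ≤ (q:ℝ) := by exact_mod_cast hq
  set Q := (q:ℝ) with hQdef
  have hQ0 : (0:ℝ) < Q := by linarith
  rw [gbin_natCast, Finset.prod_div_distrib]
  have hnum : ∏ i ∈ Finset.range K, (Q^(N-i) - 1) ≤ Q^(∑ i ∈ Finset.range K, (N-i)) := by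
    rw [← Finset.prod_pow_eq_pow_sum]
    apply Finset.prod_le_prod (fun i _ => by nlinarith [one_le_pow₀ (by linarith : (1:ℝ) ≤ Q) (n := N-i)])
      (fun i _ => by nlinarith [pow_pos hQ0 (N-i)])
  have hden : ((Q-2)/(Q-1)) * Q^(∑ i ∈ Finset.range K, (i+1)) ≤
      ∏ i ∈ Finset.range K, (Q^(i+1) - 1) := by
    have e : ∀ i ∈ Finset.range K, Q^(i+1) - 1 = Q^(i+1) * (1 - (1/Q)^(i+1)) := by
      intro i _
      have : Q^(i+1) * (1/Q)^(i+1) = 1 := by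
        rw [← mul_pow, mul_one_div, div_self (by linarith), one_pow]
      nlinarith
    rw [Finset.prod_congr rfl e, Finset.prod_mul_distrib, Finset.prod_pow_eq_pow_sum]
    rw [mul_comm ((Q-2)/(Q-1))]
    apply mul_le_mul_of_nonneg_left _ (by positivity)
    have w := weier (fun i => (1/Q)^(i+1)) (fun i => by positivity)
      (fun i => by
        apply pow_le_one₀ (by positivity)
        rw [div_le_one (by linarith)]; linarith) K
    have g := geo Q hQ K
    have hne : Q - 1 ≠ 0 := by intro hc; rw [sub_eq_zero] at hc; linarith
    have e2 : (Q-2)/(Q-1) = 1 - 1/(Q-1) := by field_simp; ring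
    rw [e2]
    linarith
  have hK : (0:ℝ) < Q^(∑ i ∈ Finset.range K, (i+1)) := by positivity
  have hden0 : (0:ℝ) < ((Q-2)/(Q-1)) * Q^(∑ i ∈ Finset.range K, (i+1)) := by
    apply mul_pos (div_pos (by linarith) (by linarith)) hK
  calc (∏ i ∈ Finset.range K, (Q^(N-i) - 1)) / (∏ i ∈ Finset.range K, (Q^(i+1) - 1))
      ≤ Q^(∑ i ∈ Finset.range K, (N-i)) / (((Q-2)/(Q-1)) * Q^(∑ i ∈ Finset.range K, (i+1))) := by
        apply div_le_div₀ (by positivity) hnum hden0 hden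
    _ = Q^(K*(N-K)) * ((Q-1)/(Q-2)) := by
        rw [sum_aux2 N K h, pow_add]
        have h2 : Q - 1 ≠ 0 := by intro hc; rw [sub_eq_zero] at hc; linarith
        have h3 : Q - 2 ≠ 0 := by intro hc; rw [sub_eq_zero] at hc; linarith
        field_simp

lemma geo0 (r : ℝ) (h0 : 0 ≤ r) (h1 : r < 1) (K : ℕ) :
    ∑ i ∈ Finset.range K, r^i ≤ 1/(1-r) := by
  rw [geom_sum_eq (by intro h; rw [h] at h1; linarith) K]
  have e : (r^K - 1)/(r - 1) = (1 - r^K)/(1-r) := by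
    rw [div_eq_div_iff (by linarith) (by linarith)]; ring
  rw [e, div_le_div_iff₀ (by linarith) (by linarith)]
  nlinarith [pow_nonneg h0 K]

lemma gbin_nonneg (q N : ℕ) (K : ℕ) (hq : 3 ≤ q) : 0 ≤ gbin q N (K:ℤ) := by
  have hQ : (3:ℝ) ≤ (q:ℝ) := by exact_mod_cast hq
  rw [gbin_natCast]
  apply Finset.prod_nonneg
  intro i _
  apply div_nonneg
  · nlinarith [one_le_pow₀ (by linarith : (1:ℝ) ≤ (q:ℝ)) (n := N-i)]
  · nlinarith [one_le_pow₀ (by linarith : (1:ℝ) ≤ (q:ℝ)) (n := i+1),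
      pow_pos (by linarith : (0:ℝ) < (q:ℝ)) (i+1)]

set_option maxHeartbeats 2000000 in
theorem stmt_10 (q n k t : ℕ) (hn : 2*k < n + t) (hk1 : t + 1 < k) (hk2 : k < 2*t + 1)
    (hq : 3 ≤ q) :
    theta q k + ∑ j ∈ Finset.range (k-t-1),
        gbin q (k-t+1) ((j:ℤ)+1) * (q:ℝ)^((k-t-j)*(k-t-j-1)) *
          gbin q (n-k-1) ((k:ℤ)-t-j-1)
    < gbin q (n-t-2) ((k:ℤ)-t-2) *
        (1 + theta q (t+1) * (q:ℝ)^(k-t-1) * (((q:ℝ)^(n-k) - 1)/((q:ℝ)^(k-t-1) - 1))) := by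
  have hQ3 : (3:ℝ) ≤ (q:ℝ) := by exact_mod_cast hq
  set Q := (q:ℝ) with hQdef
  have hQ0 : (0:ℝ) < Q := by linarith
  have hQ1 : (1:ℝ) < Q := by linarith
  have hQ2 : (0:ℝ) < Q - 2 := by linarith
  have hQm1 : (0:ℝ) < Q - 1 := by linarith
  have hu3 : 1/Q ≤ 1/3 := by
    rw [div_le_div_iff₀ hQ0 (by norm_num)]; linarith
  have hu0 : (0:ℝ) < 1/Q := by positivity
  have hiQ : 1/Q * Q = 1 := by field_simp
  set s := k - t with hs
  set d := n - k with hd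
  clear_value s d
  have hs2 : 2 ≤ s := by omega
  have hst : s ≤ t := by omega
  have hds : s + 1 ≤ d := by omega
  set X : ℕ := (s-1)*d + (t+1) with hX
  set W : ℝ := (1 + 1/Q) * Q^X with hW
  have hQX0 : 0 < Q^X := by positivity
  have hW0 : 0 < W := by positivity
  have hWQX : Q^X ≤ W := by nlinarith
  clear_value X W
  have en : n - t - 2 = d + s - 2 := by omega
  have ek2 : (k:ℤ) - t - 2 = ((s-2 : ℕ) : ℤ) := by omega
  rw [en, ek2]
  -- θ_k bound
  have Htheta : theta q k ≤ (1/6) * W := by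
    have hXge : t+s+2 ≤ X := by
      have hd2 : d ≤ (s-1)*d := Nat.le_mul_of_pos_left d (by omega)
      omega
    have hP0 : (0:ℝ) < Q^(t+s+1) := by positivity
    have hPQ : Q^(t+s+1) * Q ≤ Q^X := by
      rw [← pow_succ]; exact pow_le_pow_right₀ hQ1.le hXge
    have h1 : theta q k ≤ Q^(t+s+1)/(Q-1) := by
      apply div_le_div₀ (by positivity) _ hQm1 le_rfl
      have e : k+1 = t+s+1 := by omega
      rw [e]; linarith
    have h2 : Q^(t+s+1)/(Q-1) ≤ (1/6) * Q^X := by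
      rw [div_le_iff₀ hQm1]
      nlinarith [mul_nonneg (sub_nonneg.2 hPQ) hQm1.le,
        mul_nonneg (mul_nonneg hP0.le (by linarith : (0:ℝ) ≤ Q - 3)) (by linarith : (0:ℝ) ≤ Q + 2)]
    calc theta q k ≤ Q^(t+s+1)/(Q-1) := h1
      _ ≤ (1/6) * Q^X := h2
      _ ≤ (1/6) * W := by nlinarith
  have hrange : s - 1 = (s-2)+1 := by omega
  rw [hrange, Finset.sum_range_succ', ← hrange]
  -- f 0 bound
  have Hf0 : gbin q (s+1) ((↑(0:ℕ):ℤ)+1) * Q^((s-0)*(s-0-1)) *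
      gbin q (d-1) ((k:ℤ)-(t:ℤ)-(↑(0:ℕ):ℤ)-1) ≤ (3/4) * W := by
    have c1 : ((0:ℕ):ℤ)+1 = ((1:ℕ):ℤ) := by norm_num
    have c2 : (s-0)*(s-0-1) = s*(s-1) := by simp
    have c3 : (k:ℤ)-(t:ℤ)-(↑(0:ℕ):ℤ)-1 = ((s-1:ℕ):ℤ) := by push_cast; omega
    rw [c1, c2, c3, gbin_one]
    have b2 : gbin q (d-1) ((s-1:ℕ):ℤ) ≤ Q^((s-1)*(d-s)) * ((Q-1)/(Q-2)) := by
      have := gbin_upper q (d-1) (s-1) hq (by omega)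
      have e4 : (s-1)*((d-1)-(s-1)) = (s-1)*(d-s) := by congr 1; omega
      rwa [e4] at this
    have hAnn : (0:ℝ) ≤ (Q^(s+1)-1)/(Q-1) := by
      apply div_nonneg _ hQm1.le
      nlinarith [one_le_pow₀ hQ1.le (n := s+1)]
    have hA : (Q^(s+1)-1)/(Q-1) ≤ Q^(s+1)/(Q-1) := by
      apply div_le_div₀ (by positivity) (by linarith) hQm1 le_rfl
    have hCnn : (0:ℝ) ≤ gbin q (d-1) ((s-1:ℕ):ℤ) := gbin_nonneg q (d-1) (s-1) hq
    have hBnn : (0:ℝ) ≤ Q^(s*(s-1)) := by positivity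
    have step1 : (Q^(s+1)-1)/(Q-1) * Q^(s*(s-1)) * gbin q (d-1) ((s-1:ℕ):ℤ)
        ≤ Q^(s+1)/(Q-1) * Q^(s*(s-1)) * (Q^((s-1)*(d-s)) * ((Q-1)/(Q-2))) := by
      apply mul_le_mul (mul_le_mul_of_nonneg_right hA hBnn) b2 hCnn (by positivity)
    have epow : Q^(s+1) * Q^(s*(s-1)) * Q^((s-1)*(d-s)) = Q^((s-1)*d + (s+1)) := by
      rw [← pow_add, ← pow_add]; congr 1
      zify [show 1 ≤ s by omega, show s ≤ d by omega]; ring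
    have step2 : Q^(s+1)/(Q-1) * Q^(s*(s-1)) * (Q^((s-1)*(d-s)) * ((Q-1)/(Q-2)))
        = Q^((s-1)*d + (s+1)) / (Q-2) := by
      rw [← epow]; field_simp
    have step3 : Q^((s-1)*d + (s+1)) ≤ Q^X := by
      apply pow_le_pow_right₀ hQ1.le; omega
    have hc : (1:ℝ) ≤ (3/4)*(1+1/Q)*(Q-2) := by nlinarith
    calc (Q^(s+1)-1)/(Q-1) * Q^(s*(s-1)) * gbin q (d-1) ((s-1:ℕ):ℤ)
        ≤ Q^((s-1)*d + (s+1)) / (Q-2) := by rw [← step2]; exact step1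
      _ ≤ Q^X / (Q-2) := by apply div_le_div₀ (by positivity) step3 hQ2 le_rfl
      _ ≤ (3/4) * W := by
          rw [div_le_iff₀ hQ2, hW]
          nlinarith [mul_le_mul_of_nonneg_right hc hQX0.le]
  -- tail sum bound
  have Hsum : ∑ j ∈ Finset.range (s-2),
      gbin q (s+1) ((↑(j+1):ℤ)+1) * Q^((s-(j+1))*(s-(j+1)-1)) *
        gbin q (d-1) ((k:ℤ)-(t:ℤ)-(↑(j+1):ℤ)-1) ≤ (1/18) * W := by
    have cc : (0:ℝ) ≤ (Q-1)/(Q-2) := by positivity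
    have hterm : ∀ j ∈ Finset.range (s-2),
        gbin q (s+1) ((↑(j+1):ℤ)+1) * Q^((s-(j+1))*(s-(j+1)-1)) *
          gbin q (d-1) ((k:ℤ)-(t:ℤ)-(↑(j+1):ℤ)-1)
        ≤ ((Q-1)/(Q-2)) * ((Q-1)/(Q-2)) * Q^X * ((1/Q)^4 * ((1/Q)^3)^j) := by
      intro j hj
      rw [Finset.mem_range] at hj
      have hjs : j + 3 ≤ s := by omega
      have c1 : ((j+1:ℕ):ℤ)+1 = ((j+2:ℕ):ℤ) := by push_cast; ring
      have c3 : (k:ℤ)-(t:ℤ)-((j+1:ℕ):ℤ)-1 = ((s-j-2:ℕ):ℤ) := by push_cast; omega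
      have c2 : (s-(j+1))*(s-(j+1)-1) = (s-j-1)*(s-j-2) := by congr 1 <;> omega
      rw [c1, c2, c3]
      have u1 : gbin q (s+1) ((j+2:ℕ):ℤ) ≤ Q^((j+2)*(s-j-1)) * ((Q-1)/(Q-2)) := by
        have := gbin_upper q (s+1) (j+2) hq (by omega)
        have e5 : (j+2)*((s+1)-(j+2)) = (j+2)*(s-j-1) := by congr 1; omega
        rwa [e5] at this
      have u2 : gbin q (d-1) ((s-j-2:ℕ):ℤ) ≤ Q^((s-j-2)*(d-s+j+1)) * ((Q-1)/(Q-2)) := by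
        have := gbin_upper q (d-1) (s-j-2) hq (by omega)
        have e6 : (s-j-2)*((d-1)-(s-j-2)) = (s-j-2)*(d-s+j+1) := by congr 1; omega
        rwa [e6] at this
      have hg1 : (0:ℝ) ≤ gbin q (s+1) ((j+2:ℕ):ℤ) := gbin_nonneg q (s+1) (j+2) hq
      have hg2 : (0:ℝ) ≤ gbin q (d-1) ((s-j-2:ℕ):ℤ) := gbin_nonneg q (d-1) (s-j-2) hq
      have step1 : gbin q (s+1) ((j+2:ℕ):ℤ) * Q^((s-j-1)*(s-j-2)) * gbin q (d-1) ((s-j-2:ℕ):ℤ)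
          ≤ (Q^((j+2)*(s-j-1)) * ((Q-1)/(Q-2))) * Q^((s-j-1)*(s-j-2)) *
            (Q^((s-j-2)*(d-s+j+1)) * ((Q-1)/(Q-2))) := by
        apply mul_le_mul (mul_le_mul_of_nonneg_right u1 (by positivity)) u2 hg2 (by positivity)
      have epow : Q^((j+2)*(s-j-1)) * Q^((s-j-1)*(s-j-2)) * Q^((s-j-2)*(d-s+j+1))
          = Q^((j+2)*(s-j-1) + (s-j-1)*(s-j-2) + (s-j-2)*(d-s+j+1)) := by
        rw [← pow_add, ← pow_add]
      have hZ1 : (0:ℤ) ≤ (d:ℤ) - (s:ℤ) - 1 := by omega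
      have hZ2 : (0:ℤ) ≤ (t:ℤ) - (s:ℤ) := by omega
      have ineq : (j+2)*(s-j-1) + (s-j-1)*(s-j-2) + (s-j-2)*(d-s+j+1) + (4+3*j) ≤ X := by
        rw [hX]
        zify [show j ≤ s by omega, show 1 ≤ s - j by omega, show 2 ≤ s - j by omega,
          show s ≤ d by omega, show 1 ≤ s by omega]
        nlinarith [mul_nonneg (show (0:ℤ) ≤ (j:ℤ)+1 by positivity) hZ1,
          sq_nonneg ((j:ℤ)), hZ2, (show (0:ℤ) ≤ (j:ℤ) by positivity)]
      have h8 : Q^((j+2)*(s-j-1) + (s-j-1)*(s-j-2) + (s-j-2)*(d-s+j+1))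
          ≤ Q^X * ((1/Q)^4 * ((1/Q)^3)^j) := by
        have hp : (1/Q)^4 * ((1/Q)^3)^j = (1/Q)^(4+3*j) := by
          rw [← pow_mul, ← pow_add]
        rw [hp, one_div, inv_pow, ← one_div, mul_one_div, le_div_iff₀ (by positivity)]
        rw [← pow_add]
        exact pow_le_pow_right₀ hQ1.le ineq
      calc gbin q (s+1) ((j+2:ℕ):ℤ) * Q^((s-j-1)*(s-j-2)) * gbin q (d-1) ((s-j-2:ℕ):ℤ)
          ≤ (Q^((j+2)*(s-j-1)) * ((Q-1)/(Q-2))) * Q^((s-j-1)*(s-j-2)) *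
            (Q^((s-j-2)*(d-s+j+1)) * ((Q-1)/(Q-2))) := step1
        _ = ((Q-1)/(Q-2)) * ((Q-1)/(Q-2)) *
            Q^((j+2)*(s-j-1) + (s-j-1)*(s-j-2) + (s-j-2)*(d-s+j+1)) := by
            rw [← epow]; ring
        _ ≤ ((Q-1)/(Q-2)) * ((Q-1)/(Q-2)) * Q^X * ((1/Q)^4 * ((1/Q)^3)^j) := by
            rw [mul_assoc (((Q-1)/(Q-2)) * ((Q-1)/(Q-2)))]
            apply mul_le_mul_of_nonneg_left h8 (by positivity)
    calc ∑ j ∈ Finset.range (s-2),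
          gbin q (s+1) ((↑(j+1):ℤ)+1) * Q^((s-(j+1))*(s-(j+1)-1)) *
            gbin q (d-1) ((k:ℤ)-(t:ℤ)-(↑(j+1):ℤ)-1)
        ≤ ∑ j ∈ Finset.range (s-2),
            ((Q-1)/(Q-2)) * ((Q-1)/(Q-2)) * Q^X * ((1/Q)^4 * ((1/Q)^3)^j) :=
          Finset.sum_le_sum hterm
      _ = ((Q-1)/(Q-2)) * ((Q-1)/(Q-2)) * Q^X * (1/Q)^4 *
            ∑ j ∈ Finset.range (s-2), ((1/Q)^3)^j := by
          rw [Finset.mul_sum]; exact Finset.sum_congr rfl fun j _ => by ring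
      _ ≤ (1/18) * W := by
          have hr3 : ((1/Q)^3 : ℝ) < 1 := by
            calc ((1/Q)^3 : ℝ) ≤ (1/3)^3 := pow_le_pow_left₀ hu0.le hu3 3
              _ < 1 := by norm_num
          have hgs : ∑ j ∈ Finset.range (s-2), ((1/Q)^3)^j ≤ 1/(1-(1/Q)^3) :=
            geo0 _ (by positivity) hr3 _
          have h27 : ((1/Q)^3 : ℝ) ≤ 1/27 := by
            calc ((1/Q)^3 : ℝ) ≤ (1/3)^3 := pow_le_pow_left₀ hu0.le hu3 3
              _ = 1/27 := by norm_num
          have hden : 1/(1-(1/Q)^3) ≤ 27/26 := by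
            rw [div_le_div_iff₀ (by linarith) (by norm_num)]
            linarith
          have hgs2 : ∑ j ∈ Finset.range (s-2), ((1/Q)^3)^j ≤ 27/26 := hgs.trans hden
          have hcc2 : (Q-1)/(Q-2) ≤ 2 := by rw [div_le_iff₀ hQ2]; linarith
          have h81 : ((1/Q)^4 : ℝ) ≤ 1/81 := by
            calc ((1/Q)^4 : ℝ) ≤ (1/3)^4 := pow_le_pow_left₀ hu0.le hu3 4
              _ ≤ 1/81 := by norm_num
          have hgsnn : (0:ℝ) ≤ ∑ j ∈ Finset.range (s-2), ((1/Q)^3)^j :=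
            Finset.sum_nonneg fun j _ => by positivity
          have : ((Q-1)/(Q-2)) * ((Q-1)/(Q-2)) * Q^X * (1/Q)^4 *
              ∑ j ∈ Finset.range (s-2), ((1/Q)^3)^j
              ≤ 2 * 2 * Q^X * (1/81) * (27/26) := by
            apply mul_le_mul _ hgs2 hgsnn (by positivity)
            apply mul_le_mul _ h81 (by positivity) (by positivity)
            apply mul_le_mul _ le_rfl hQX0.le (by positivity)
            apply mul_le_mul hcc2 hcc2 cc (by norm_num)
          calc ((Q-1)/(Q-2)) * ((Q-1)/(Q-2)) * Q^X * (1/Q)^4 *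
              ∑ j ∈ Finset.range (s-2), ((1/Q)^3)^j
              ≤ 2 * 2 * Q^X * (1/81) * (27/26) := this
            _ ≤ (1/18) * Q^X := by nlinarith
            _ ≤ (1/18) * W := by nlinarith
  -- RHS bound
  have HG : Q^((s-2)*d) ≤ gbin q (d+s-2) ((s-2:ℕ):ℤ) := by
    have := gbin_lower q (d+s-2) (s-2) hq (by omega)
    have e : (s-2)*((d+s-2)-(s-2)) = (s-2)*d := by congr 1; omega
    rwa [e] at this
  have hG0 : 0 < gbin q (d+s-2) ((s-2:ℕ):ℤ) := lt_of_lt_of_le (by positivity) HG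
  have HM : W ≤ gbin q (d+s-2) ((s-2:ℕ):ℤ) *
      (theta q (t+1) * Q^(s-1) * ((Q^d - 1)/(Q^(s-1) - 1))) := by
    have m1 : Q^(t+1) + Q^t ≤ theta q (t+1) := by
      rw [theta, le_div_iff₀ hQm1]
      have e1 : Q^(t+1) = Q^t*Q := pow_succ Q t
      have e2 : Q^(t+1+1) = Q^t*Q*Q := by rw [pow_succ, pow_succ]
      nlinarith [one_le_pow₀ hQ1.le (n := t)]
    have m2 : Q^(d-(s-1)) ≤ (Q^d-1)/(Q^(s-1)-1) :=
      ratio_ge Q hQ1 d (s-1) (by omega) (by omega)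
    have hm1nn : (0:ℝ) < Q^(t+1) + Q^t := by positivity
    have hMnn : (0:ℝ) ≤ (Q^(t+1)+Q^t) * Q^(s-1) := by positivity
    have m3 : (Q^(t+1)+Q^t) * Q^(s-1) * Q^(d-(s-1)) ≤
        theta q (t+1) * Q^(s-1) * ((Q^d - 1)/(Q^(s-1) - 1)) := by
      apply mul_le_mul (mul_le_mul_of_nonneg_right m1 (by positivity)) m2 (by positivity)
      nlinarith [pow_nonneg hQ0.le (s-1)]
    have m4 : W = Q^((s-2)*d) * ((Q^(t+1)+Q^t) * Q^(s-1) * Q^(d-(s-1))) := by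
      have A1 : Q^((s-2)*d) * Q^(t+1) * Q^(s-1) * Q^(d-(s-1)) = Q^X := by
        rw [hX, ← pow_add, ← pow_add, ← pow_add]; congr 1
        zify [show 2 ≤ s by omega, show 1 ≤ s by omega, show s-1 ≤ d by omega]; ring
      have A2 : Q^((s-2)*d) * Q^t * Q^(s-1) * Q^(d-(s-1)) = Q^((s-1)*d + t) := by
        rw [← pow_add, ← pow_add, ← pow_add]; congr 1
        zify [show 2 ≤ s by omega, show 1 ≤ s by omega, show s-1 ≤ d by omega]; ring
      have eX : X = ((s-1)*d+t)+1 := by omega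
      have A3 : (1+1/Q)*Q^X = Q^X + Q^((s-1)*d + t) := by
        rw [eX, pow_succ]
        field_simp
      rw [hW, A3, ← A1, ← A2]; ring
    rw [m4]
    apply mul_le_mul HG m3 (by positivity) hG0.le
  -- final assembly
  have hfinal := add_le_add Htheta (add_le_add Hsum Hf0)
  have hR : gbin q (d+s-2) ((s-2:ℕ):ℤ) *
      (1 + theta q (t+1) * Q^(s-1) * ((Q^d - 1)/(Q^(s-1) - 1)))
      = gbin q (d+s-2) ((s-2:ℕ):ℤ) + gbin q (d+s-2) ((s-2:ℕ):ℤ) *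
        (theta q (t+1) * Q^(s-1) * ((Q^d - 1)/(Q^(s-1) - 1))) := by ring
  rw [hR]
  linarith
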